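/- Let A(ξ,λ) = Σ_{j=2μ}^{2m} λ^{2m−j} A_j(ξ), where for all ξ ∈ ℝⁿ the values A_j(ξ) are real for even j and purely imaginary for odd j (the situation of a differential operator with real coefficients). Assume the strong ellipticity estimate Re A(ξ,λ) ≥ C |ξ|^{2μ} (λ + |ξ|)^{2m−2μ} holds for all ξ ∈ ℝⁿ and λ ∈ [0,∞) with some C > 0. Then the polynomial Q(τ) := τ^{−2μ} A((0,…,0,τ),1) has exactly m − μ roots, counted with multiplicity, with positive imaginary part (i.e. A degenerates regularly for λ → ∞). -/

import Mathlib

open MeasureTheory Finset Polynomial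

noncomputable section

/-- `A : ℝⁿ → ℂ` is a (complex-valued) polynomial map, homogeneous of degree `j`
(under positive scaling). -/
def IsHomogPoly (n j : ℕ) (A : EuclideanSpace ℝ (Fin n) → ℂ) : Prop :=
  (∃ p : MvPolynomial (Fin n) ℂ, ∀ ξ, A ξ = MvPolynomial.eval (fun i => (ξ i : ℂ)) p) ∧
    ∀ t : ℝ, 0 < t → ∀ ξ, A (t • ξ) = (t : ℂ) ^ j * A ξ

/-- The operator pencil `A(ξ,λ) = Σ_{j=2μ}^{2m} λ^{2m−j} A_j(ξ)`. -/
def pencil {n : ℕ} (m μ : ℕ) (A : ℕ → EuclideanSpace ℝ (Fin n) → ℂ)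
    (ξ : EuclideanSpace ℝ (Fin n)) (lam : ℝ) : ℂ :=
  ∑ j ∈ Finset.Icc (2 * μ) (2 * m), (lam : ℂ) ^ (2 * m - j) * A j ξ

/-- The vector `(ξ', t) ∈ ℝ^{k+1}` obtained by appending a last coordinate. -/
def snocVec {k : ℕ} (ξ' : EuclideanSpace ℝ (Fin k)) (t : ℝ) :
    EuclideanSpace ℝ (Fin (k + 1)) :=
  (WithLp.equiv 2 (Fin (k + 1) → ℝ)).symm (Fin.snoc (WithLp.equiv 2 (Fin k → ℝ) ξ') t)

/-!
Strong ellipticity gives `Re Q ≥ c > 0` on the real axis (at `τ = 0` by continuity), so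
`arg Q(τ) ∈ [-π/2, π/2]` for real `τ`. Writing `Q = a ∏ (X - z)` over its roots, the continuous
function `Σ arg (τ - z)` is congruent to `arg Q(τ) - arg a` modulo `2π`, hence differs from the
continuous function `arg Q(τ)` by a constant. As `τ` runs from `-∞` to `+∞`, every root in the
upper half plane adds `π` to this sum and every other root subtracts `π`, so the numbers of roots in
the two half planes differ by at most one. They add up to the even degree `2m - 2μ`, hence are
equal.
-/

open Complex Filter Topology Real

namespace Complex

lemma continuous_arg_ofReal_sub {z : ℂ} (hz : z.im ≠ 0) :
    Continuous fun τ : ℝ => arg (τ - z) :=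
  continuousOn_arg.comp_continuous (by fun_prop) fun τ =>
    mem_slitPlane_iff.2 (Or.inr (by simpa using hz))

lemma tendsto_arg_ofReal_sub_atTop (z : ℂ) :
    Tendsto (fun τ : ℝ => arg (τ - z)) atTop (𝓝 0) := by
  have hinv : Tendsto (fun τ : ℝ => ((τ : ℂ))⁻¹) atTop (𝓝 0) := by
    simpa [Function.comp_def] using (continuous_ofReal.tendsto 0).comp tendsto_inv_atTop_zero
  have hlim : Tendsto (fun τ : ℝ => 1 - z * (τ : ℂ)⁻¹) atTop (𝓝 1) := by
    simpa using tendsto_const_nhds.sub (hinv.const_mul z)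
  have harg := (continuousAt_arg one_mem_slitPlane).tendsto.comp hlim
  rw [arg_one] at harg
  refine harg.congr' ?_
  filter_upwards [eventually_gt_atTop 0] with τ hτ
  have hτ' : (τ : ℂ) ≠ 0 := ofReal_ne_zero.2 hτ.ne'
  rw [Function.comp_apply, ← arg_real_mul _ hτ]
  congr 1
  field_simp

lemma tendsto_arg_ofReal_sub_atBot_of_im_pos {z : ℂ} (hz : 0 < z.im) :
    Tendsto (fun τ : ℝ => arg (τ - z)) atBot (𝓝 (-π)) := by
  have h := ((tendsto_arg_ofReal_sub_atTop (-z)).comp tendsto_neg_atBot_atTop).sub_const π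
  rw [zero_sub] at h
  refine h.congr fun τ => ?_
  rw [Function.comp_apply, ← arg_neg_eq_arg_sub_pi_of_im_pos (by simpa using hz)]
  congr 1
  push_cast
  ring

lemma tendsto_arg_ofReal_sub_atBot_of_im_neg {z : ℂ} (hz : z.im < 0) :
    Tendsto (fun τ : ℝ => arg (τ - z)) atBot (𝓝 π) := by
  have h := ((tendsto_arg_ofReal_sub_atTop (-z)).comp tendsto_neg_atBot_atTop).add_const π
  rw [zero_add] at h
  refine h.congr fun τ => ?_
  rw [Function.comp_apply, ← arg_neg_eq_arg_add_pi_of_im_neg (by simpa using hz)]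
  congr 1
  push_cast
  ring

lemma coe_sum_arg_eq_arg_prod {s : Multiset ℂ} (hs : ∀ z ∈ s, z ≠ 0) :
    ((s.map arg).sum : Real.Angle) = arg s.prod := by
  induction s using Multiset.induction_on with
  | empty => simp
  | cons a s ih =>
    have hs' : ∀ z ∈ s, z ≠ 0 := fun z hz => hs z (Multiset.mem_cons_of_mem hz)
    rw [Multiset.map_cons, Multiset.sum_cons, Multiset.prod_cons, Real.Angle.coe_add,
      arg_mul_coe_angle (hs a (Multiset.mem_cons_self a s))
        (Multiset.prod_ne_zero fun h0 => hs' 0 h0 rfl), ih hs']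

end Complex

namespace Polynomial

lemma eval_eq_leadingCoeff_mul_prod_sub {K : Type*} [Field K] [IsAlgClosed K] (Q : K[X]) (x : K) :
    Q.eval x = Q.leadingCoeff * (Q.roots.map fun z => x - z).prod := by
  conv_lhs =>
    rw [← C_leadingCoeff_mul_prod_multiset_X_sub_C (IsAlgClosed.card_roots_eq_natDegree (p := Q))]
  simp [eval_multiset_prod, Multiset.map_map]

def rootArgSum (s : Multiset ℂ) (τ : ℝ) : ℝ := (s.map fun z => arg (τ - z)).sum

lemma tendsto_rootArgSum_atTop (s : Multiset ℂ) : Tendsto (rootArgSum s) atTop (𝓝 0) := by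
  have h := tendsto_multiset_sum s (f := fun z (τ : ℝ) => arg (τ - z))
    fun z _ => tendsto_arg_ofReal_sub_atTop z
  rwa [Multiset.map_const', Multiset.sum_replicate, smul_zero] at h

lemma tendsto_rootArgSum_atBot {s : Multiset ℂ} (hs : ∀ z ∈ s, z.im ≠ 0) :
    Tendsto (rootArgSum s) atBot (𝓝 (π * (Multiset.card (s.filter fun z => ¬ 0 < z.im)
      - Multiset.card (s.filter fun z => 0 < z.im) : ℝ))) := by
  suffices hsum : (s.map fun z => if 0 < z.im then -π else π).sum
      = π * (Multiset.card (s.filter fun z => ¬ 0 < z.im)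
        - Multiset.card (s.filter fun z => 0 < z.im) : ℝ) by
    rw [← hsum]
    refine tendsto_multiset_sum s (f := fun z (τ : ℝ) => arg (τ - z)) fun z hz => ?_
    by_cases hpos : 0 < z.im
    · simpa [hpos] using tendsto_arg_ofReal_sub_atBot_of_im_pos hpos
    · simpa [hpos] using tendsto_arg_ofReal_sub_atBot_of_im_neg
        ((not_lt.1 hpos).lt_of_ne (hs z hz))
  conv_lhs => rw [← Multiset.filter_add_not (fun z => 0 < z.im) s]
  rw [Multiset.map_add, Multiset.sum_add,
    Multiset.map_congr rfl fun z hz => if_pos (Multiset.of_mem_filter hz),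
    Multiset.map_congr rfl fun z hz =>
      if_neg (Multiset.of_mem_filter (p := fun z : ℂ => ¬ 0 < z.im) hz),
    Multiset.map_const', Multiset.map_const', Multiset.sum_replicate, Multiset.sum_replicate,
    nsmul_eq_mul, nsmul_eq_mul]
  ring

section ArgumentPrinciple

variable {Q : ℂ[X]} (hQ : ∀ τ : ℝ, 0 < (Q.eval (τ : ℂ)).re)
include hQ

lemma im_ne_zero_of_mem_roots_of_re_pos {z : ℂ} (hz : z ∈ Q.roots) : z.im ≠ 0 := by
  intro him
  have hroot : Q.eval (z.re : ℂ) = 0 := by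
    rw [← (mem_roots'.1 hz).2]
    congr
    exact Complex.ext rfl (by simp [him])
  simpa [hroot] using hQ z.re

lemma coe_rootArgSum_sub_arg_eval (τ : ℝ) :
    ((rootArgSum Q.roots τ - arg (Q.eval (τ : ℂ)) : ℝ) : Real.Angle) = -arg Q.leadingCoeff := by
  have hsub : ∀ w ∈ Q.roots.map fun z => (τ : ℂ) - z, w ≠ 0 := by
    simp only [Multiset.mem_map]
    rintro _ ⟨z, hz, rfl⟩ h0
    exact im_ne_zero_of_mem_roots_of_re_pos hQ hz (by simpa using congrArg im h0)
  have hlc : Q.leadingCoeff ≠ 0 := leadingCoeff_ne_zero.2 fun h0 => by simpa [h0] using hQ 0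
  have hprod : ((rootArgSum Q.roots τ : ℝ) : Real.Angle)
      = arg (Q.roots.map fun z => (τ : ℂ) - z).prod := by
    simpa [rootArgSum, Multiset.map_map, Function.comp_def] using coe_sum_arg_eq_arg_prod hsub
  rw [Real.Angle.coe_sub, hprod, eval_eq_leadingCoeff_mul_prod_sub,
    arg_mul_coe_angle hlc (Multiset.prod_ne_zero fun h0 => hsub 0 h0 rfl)]
  abel

lemma continuous_rootArgSum_roots : Continuous (rootArgSum Q.roots) :=
  continuous_multiset_sum _ fun _ hz =>
    continuous_arg_ofReal_sub (im_ne_zero_of_mem_roots_of_re_pos hQ hz)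

lemma continuous_arg_eval_ofReal : Continuous fun τ : ℝ => arg (Q.eval (τ : ℂ)) :=
  continuousOn_arg.comp_continuous (Q.continuous.comp continuous_ofReal) fun τ =>
    mem_slitPlane_iff.2 (Or.inl (hQ τ))

/-- A continuous real function that is constant modulo `2π` is constant, as `ℝ → Real.Angle` is
a covering map. -/
lemma rootArgSum_sub_arg_eval_eq (τ σ : ℝ) :
    rootArgSum Q.roots τ - arg (Q.eval (τ : ℂ)) = rootArgSum Q.roots σ - arg (Q.eval (σ : ℂ)) :=
  (AddCircle.isCoveringMap_coe (2 * π)).const_of_comp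
    ((continuous_rootArgSum_roots hQ).sub (continuous_arg_eval_ofReal hQ))
    (fun τ σ => (coe_rootArgSum_sub_arg_eval hQ τ).trans (coe_rootArgSum_sub_arg_eval hQ σ).symm)
    τ σ

lemma abs_card_roots_im_nonpos_sub_card_roots_im_pos_le_one :
    |(Multiset.card (Q.roots.filter fun z => ¬ 0 < z.im)
      - Multiset.card (Q.roots.filter fun z => 0 < z.im) : ℝ)| ≤ 1 := by
  set d : ℝ := Multiset.card (Q.roots.filter fun z => ¬ 0 < z.im)
    - Multiset.card (Q.roots.filter fun z => 0 < z.im)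
  set c : ℝ := rootArgSum Q.roots 0 - arg (Q.eval ((0 : ℝ) : ℂ))
  have harg : (fun τ : ℝ => |arg (Q.eval (τ : ℂ))|) = fun τ => |rootArgSum Q.roots τ - c| := by
    funext τ
    rw [show c = _ from rootArgSum_sub_arg_eval_eq hQ 0 τ, sub_sub_cancel]
  have hbound : ∀ τ : ℝ, |arg (Q.eval (τ : ℂ))| ≤ π / 2 := fun τ =>
    abs_arg_le_pi_div_two_iff.2 (hQ τ).le
  have htop : |0 - c| ≤ π / 2 := by
    refine le_of_tendsto (x := atTop) ?_ (Eventually.of_forall hbound)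
    rw [harg]
    exact ((tendsto_rootArgSum_atTop _).sub_const c).abs
  have hbot : |π * d - c| ≤ π / 2 := by
    refine le_of_tendsto (x := atBot) ?_ (Eventually.of_forall hbound)
    rw [harg]
    exact ((tendsto_rootArgSum_atBot fun _ hz =>
      im_ne_zero_of_mem_roots_of_re_pos hQ hz).sub_const c).abs
  have hπd : |π * d| ≤ π := by
    calc |π * d| = |(π * d - c) - (0 - c)| := by ring_nf
      _ ≤ |π * d - c| + |0 - c| := abs_sub _ _
      _ ≤ π := by linarith
  rwa [abs_mul, abs_of_pos pi_pos, mul_le_iff_le_one_right pi_pos] at hπd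

theorem two_mul_card_roots_im_pos_eq_natDegree (heven : Even Q.natDegree) :
    2 * Multiset.card (Q.roots.filter fun z => 0 < z.im) = Q.natDegree := by
  have hcard : Multiset.card (Q.roots.filter fun z => 0 < z.im)
      + Multiset.card (Q.roots.filter fun z => ¬ 0 < z.im) = Q.natDegree := by
    rw [← Multiset.card_add, Multiset.filter_add_not, IsAlgClosed.card_roots_eq_natDegree]
  have hdiff := abs_card_roots_im_nonpos_sub_card_roots_im_pos_le_one hQ
  set p := Multiset.card (Q.roots.filter fun z => 0 < z.im)
  set q := Multiset.card (Q.roots.filter fun z => ¬ 0 < z.im)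
  have hpq : p ≤ q + 1 := by exact_mod_cast (by linarith [(abs_le.1 hdiff).1] : (p : ℝ) ≤ q + 1)
  have hqp : q ≤ p + 1 := by exact_mod_cast (by linarith [(abs_le.1 hdiff).2] : (q : ℝ) ≤ p + 1)
  obtain ⟨r, hr⟩ := heven
  omega

end ArgumentPrinciple

end Polynomial

/-- A polynomial in `t` that agrees with `t ^ j * A v` for `t > 0` agrees with it everywhere. -/
lemma IsHomogPoly.apply_smul {n j : ℕ} {A : EuclideanSpace ℝ (Fin n) → ℂ}
    (hA : IsHomogPoly n j A) (t : ℝ) (v : EuclideanSpace ℝ (Fin n)) :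
    A (t • v) = (t : ℂ) ^ j * A v := by
  obtain ⟨⟨p, hp⟩, hhom⟩ := hA
  let r : ℂ[X] := MvPolynomial.aeval (fun i => C ((v i : ℝ) : ℂ) * X) p
  have hr : ∀ s : ℝ, r.eval (s : ℂ) = A (s • v) := by
    intro s
    rw [hp, ← Polynomial.coe_aeval_eq_eval, ← AlgHom.comp_apply, MvPolynomial.comp_aeval,
      MvPolynomial.aeval_eq_eval]
    congr 2 with i
    simp
    ring
  have hr' : r = C (A v) * X ^ j := by
    refine eq_of_infinite_eval_eq _ _ (((Set.Ioi_infinite 0).image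
      Complex.ofReal_injective.injOn).mono ?_)
    rintro _ ⟨s, hs, rfl⟩
    rw [Set.mem_ofPred_eq, hr, hhom s hs]
    simp only [eval_mul, eval_C, eval_pow, eval_X]
    ring
  rw [← hr, hr']
  simp only [eval_mul, eval_C, eval_pow, eval_X]
  ring

lemma snocVec_zero_eq_smul {k : ℕ} (τ : ℝ) :
    snocVec (0 : EuclideanSpace ℝ (Fin k)) τ = τ • snocVec 0 1 := by
  ext i
  refine Fin.lastCases ?_ (fun i => ?_) i <;> simp [snocVec]

lemma norm_snocVec_zero_one {k : ℕ} : ‖snocVec (0 : EuclideanSpace ℝ (Fin k)) 1‖ = 1 := by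
  simp [EuclideanSpace.norm_eq, Fin.sum_univ_castSucc, snocVec]

section Symbol

variable {n : ℕ}

/-- The restriction `τ ↦ τ^{-2μ} A(τ v, 1)` of the pencil to the line through `v`. -/
def symbolPoly (m μ : ℕ) (A : ℕ → EuclideanSpace ℝ (Fin n) → ℂ) (v : EuclideanSpace ℝ (Fin n)) :
    ℂ[X] :=
  ∑ j ∈ Icc (2 * μ) (2 * m), C (A j v) * X ^ (j - 2 * μ)

variable {m μ : ℕ} {A : ℕ → EuclideanSpace ℝ (Fin n) → ℂ}

lemma pencil_zero (hμm : μ ≤ m) (ξ : EuclideanSpace ℝ (Fin n)) :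
    pencil m μ A ξ 0 = A (2 * m) ξ := by
  rw [pencil, sum_eq_single_of_mem (2 * m) (mem_Icc.2 ⟨by omega, le_rfl⟩)]
  · simp
  · intro j hj hne
    have := (mem_Icc.1 hj).2
    simp [zero_pow (by omega : 2 * m - j ≠ 0)]

lemma natDegree_symbolPoly (hμm : μ ≤ m) {v : EuclideanSpace ℝ (Fin n)} (hv : A (2 * m) v ≠ 0) :
    (symbolPoly m μ A v).natDegree = 2 * m - 2 * μ := by
  refine natDegree_eq_of_le_of_coeff_ne_zero
    (natDegree_sum_le_of_forall_le _ _ fun j hj => ?_) ?_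
  · exact (natDegree_C_mul_X_pow_le _ _).trans (by have := (mem_Icc.1 hj).2; omega)
  · rwa [symbolPoly, finsetSum_coeff, sum_eq_single_of_mem (2 * m)
      (mem_Icc.2 ⟨by omega, le_rfl⟩), coeff_C_mul_X_pow, if_pos rfl]
    intro j hj hne
    rw [coeff_C_mul_X_pow, if_neg (by have := mem_Icc.1 hj; omega)]

variable (hA : ∀ j ∈ Icc (2 * μ) (2 * m), IsHomogPoly n j (A j))
include hA

lemma ofReal_pow_mul_eval_symbolPoly (v : EuclideanSpace ℝ (Fin n)) (τ : ℝ) :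
    (τ : ℂ) ^ (2 * μ) * (symbolPoly m μ A v).eval (τ : ℂ) = pencil m μ A (τ • v) 1 := by
  rw [symbolPoly, eval_finsetSum, mul_sum, pencil]
  refine sum_congr rfl fun j hj => ?_
  rw [(hA j hj).apply_smul, eval_mul, eval_C, eval_pow, eval_X, ← mul_assoc, mul_comm _ (A j v),
    mul_assoc, ← pow_add, Nat.add_sub_cancel' (mem_Icc.1 hj).1]
  simp [mul_comm]

lemma re_eval_symbolPoly_pos {c : ℝ} (hc : 0 < c)
    (hstrong : ∀ (ξ : EuclideanSpace ℝ (Fin n)) (lam : ℝ), 0 ≤ lam →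
      c * ‖ξ‖ ^ (2 * μ) * (lam + ‖ξ‖) ^ (2 * m - 2 * μ) ≤ (pencil m μ A ξ lam).re)
    {v : EuclideanSpace ℝ (Fin n)} (hv : v ≠ 0) (τ : ℝ) :
    0 < ((symbolPoly m μ A v).eval (τ : ℂ)).re := by
  set b := c * ‖v‖ ^ (2 * μ)
  have hb : 0 < b := mul_pos hc (pow_pos (norm_pos_iff.2 hv) _)
  have hbound : ∀ σ : ℝ, σ ≠ 0 → b ≤ ((symbolPoly m μ A v).eval (σ : ℂ)).re := by
    intro σ hσ
    have hσμ : 0 < σ ^ (2 * μ) := (even_two_mul μ).pow_pos hσ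
    have h := hstrong (σ • v) 1 zero_le_one
    rw [← ofReal_pow_mul_eval_symbolPoly hA, ← Complex.ofReal_pow, Complex.re_ofReal_mul,
      norm_smul, Real.norm_eq_abs, mul_pow, (even_two_mul μ).pow_abs] at h
    have h1 : 1 ≤ (1 + |σ| * ‖v‖) ^ (2 * m - 2 * μ) :=
      one_le_pow₀ (le_add_of_nonneg_right (by positivity))
    refine le_of_mul_le_mul_left ?_ hσμ
    calc σ ^ (2 * μ) * b = c * (σ ^ (2 * μ) * ‖v‖ ^ (2 * μ)) * 1 := by ring
      _ ≤ _ := mul_le_mul_of_nonneg_left h1 (by positivity)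
      _ ≤ _ := h
  have hclosed : IsClosed {σ : ℝ | b ≤ ((symbolPoly m μ A v).eval (σ : ℂ)).re} :=
    isClosed_le continuous_const (by fun_prop)
  have hall := (hclosed.closure_subset_iff (s := {0}ᶜ)).2 fun σ hσ => hbound σ hσ
  rw [(dense_compl_singleton (0 : ℝ)).closure_eq] at hall
  exact hb.trans_le (hall (Set.mem_univ τ))

end Symbol

theorem statement3_general (k m μ : ℕ) (hμm : μ < m)
    (A : ℕ → EuclideanSpace ℝ (Fin (k + 1)) → ℂ)
    (hA : ∀ j ∈ Finset.Icc (2 * μ) (2 * m), IsHomogPoly (k + 1) j (A j))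
    (hstrong : ∃ C > (0 : ℝ), ∀ (ξ : EuclideanSpace ℝ (Fin (k + 1))) (lam : ℝ), 0 ≤ lam →
      C * ‖ξ‖ ^ (2 * μ) * (lam + ‖ξ‖) ^ (2 * m - 2 * μ) ≤ (pencil m μ A ξ lam).re) :
    ∃ Q : Polynomial ℂ,
      (∀ τ : ℝ, τ ≠ 0 →
        Polynomial.eval (τ : ℂ) Q
          = ((τ : ℂ) ^ (2 * μ))⁻¹ * pencil m μ A (snocVec (0 : EuclideanSpace ℝ (Fin k)) τ) 1) ∧
      Multiset.card (Q.roots.filter fun z => 0 < z.im) = m - μ := by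
  obtain ⟨C, hC, hstr⟩ := hstrong
  have he : ‖snocVec (0 : EuclideanSpace ℝ (Fin k)) 1‖ = 1 := norm_snocVec_zero_one
  have hlead : A (2 * m) (snocVec 0 1) ≠ 0 := fun h0 => by
    have h := hstr (snocVec 0 1) 0 le_rfl
    rw [pencil_zero hμm.le, h0, he] at h
    norm_num at h
    linarith
  have hpos := re_eval_symbolPoly_pos hA hC hstr (norm_ne_zero_iff.1 (he ▸ one_ne_zero))
  have hdeg := natDegree_symbolPoly hμm.le hlead
  refine ⟨symbolPoly m μ A (snocVec 0 1), fun τ hτ => ?_, ?_⟩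
  · rw [snocVec_zero_eq_smul τ, ← ofReal_pow_mul_eval_symbolPoly hA,
      inv_mul_cancel_left₀ (pow_ne_zero _ (Complex.ofReal_ne_zero.2 hτ))]
  · have h := two_mul_card_roots_im_pos_eq_natDegree hpos (hdeg ▸ ⟨m - μ, by omega⟩)
    omega

/-- for a strongly elliptic pencil coming from an operator with real
coefficients (`A_j` real for even `j`, purely imaginary for odd `j`), the polynomial
`Q(τ) = τ^{-2μ}A((0,…,0,τ),1)` has exactly `m − μ` roots (with multiplicity) with
positive imaginary part, i.e. `A` degenerates regularly for `λ → ∞`. -/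
theorem statement3 (k m μ : ℕ) (hμm : μ < m)
    (A : ℕ → EuclideanSpace ℝ (Fin (k + 1)) → ℂ)
    (hA : ∀ j ∈ Finset.Icc (2 * μ) (2 * m), IsHomogPoly (k + 1) j (A j))
    (hreal : ∀ j : ℕ, Even j → ∀ ξ, (A j ξ).im = 0)
    (himag : ∀ j : ℕ, Odd j → ∀ ξ, (A j ξ).re = 0)
    (hstrong : ∃ C > (0 : ℝ), ∀ (ξ : EuclideanSpace ℝ (Fin (k + 1))) (lam : ℝ), 0 ≤ lam →
      C * ‖ξ‖ ^ (2 * μ) * (lam + ‖ξ‖) ^ (2 * m - 2 * μ) ≤ (pencil m μ A ξ lam).re) :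
    ∃ Q : Polynomial ℂ,
      (∀ τ : ℝ, τ ≠ 0 →
        Polynomial.eval (τ : ℂ) Q
          = ((τ : ℂ) ^ (2 * μ))⁻¹ * pencil m μ A (snocVec (0 : EuclideanSpace ℝ (Fin k)) τ) 1) ∧
      Multiset.card (Q.roots.filter fun z => 0 < z.im) = m - μ :=
  statement3_general k m μ hμm A hA hstrong

end
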